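/- Let d ≥ 1, K > 1, T ∈ (0,1]. Let g : ℝ^d → L(ℝ^d,ℝ^d) and f : ℝ^d → ℝ^d be bounded continuously differentiable functions with bounded derivatives, and set f̂(u) := f(u) + u. Let H : [0,T] → C_{per}([0,2π],ℝ^d) be continuous with H̄ := sup_{0≤t≤T} ‖H_t‖_∞, and let U, w, w̄ : [0,T] → C¹_{per}([0,2π],ℝ^d) be continuous with sup_{0≤t≤T} ‖U_t‖_{C¹} ≤ K, sup_{0≤t≤T} ‖w_t‖_{C¹} ≤ K, sup_{0≤t≤T} ‖w̄_t‖_{C¹} ≤ K. Set u_s := w_s + H_s + U_s, ū_s := w̄_s + H_s + U_s, and (M w)(t,x) := ∫₀^t ( S_{t−s}( g(u_s)(∂_x w_s + ∂_x U_s) + f̂(u_s) ) )(x) ds, where S is the periodic heat semigroup. Then there exists a constant C, depending only on K, d, ‖g‖_∞, ‖Dg‖_∞, ‖Df‖_∞ and the heat-semigroup constant C₀ (and not on T, H, U, w, w̄), such that sup_{0≤t≤T} ‖(M w)(t,·) − (M w̄)(t,·)‖_{C¹} ≤ C (1 + H̄) T^{1/2} · sup_{0≤s≤T} ‖w_s −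 w̄_s‖_{C¹}. -/

import Mathlib

open MeasureTheory

/-- The `2π`-periodic heat kernel `p_t(x) = (2πt)^{-1/2} Σ_{n∈ℤ} exp(-(x-2πn)²/(2t))`. -/
noncomputable def heatKernel (t x : ℝ) : ℝ :=
  (1 / Real.sqrt (2 * Real.pi * t)) *
    ∑' n : ℤ, Real.exp (-(x - 2 * Real.pi * n) ^ 2 / (2 * t))

/-- The periodic heat semigroup `(S_t v)(x) = ∫₀^{2π} p_t(x-y) v(y) dy`. -/
noncomputable def heatSemigroup {d : ℕ} (t : ℝ) (v : ℝ → EuclideanSpace ℝ (Fin d)) (x : ℝ) :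
    EuclideanSpace ℝ (Fin d) :=
  ∫ y in (0 : ℝ)..(2 * Real.pi), heatKernel t (x - y) • v y

/-- The drift part of the fixed-point map:
`(M w)(t,x) = ∫₀^t (S_{t-s}( g(u_s)(∂ₓw_s + ∂ₓU_s) + f(u_s) + u_s ))(x) ds`
with `u_s = w_s + H_s + U_s`. -/
noncomputable def driftMap {d : ℕ}
    (g : EuclideanSpace ℝ (Fin d) → (EuclideanSpace ℝ (Fin d) →L[ℝ] EuclideanSpace ℝ (Fin d)))
    (f : EuclideanSpace ℝ (Fin d) → EuclideanSpace ℝ (Fin d))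
    (H U w : ℝ → ℝ → EuclideanSpace ℝ (Fin d)) (t x : ℝ) : EuclideanSpace ℝ (Fin d) :=
  ∫ s in (0 : ℝ)..t, heatSemigroup (t - s)
    (fun y => g (w s y + H s y + U s y) (deriv (w s) y + deriv (U s) y)
      + (f (w s y + H s y + U s y) + (w s y + H s y + U s y))) x

/-!
The two drift integrands differ pointwise by at most `(2K‖Dg‖_∞ + ‖g‖_∞ + ‖Df‖_∞ + 1) D`, by the
Lipschitz bounds on `g` and `f` and `‖∂ₓw_s + ∂ₓU_s‖ ≤ 2K`. The heat semigroup is linear, so the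
difference of the drift maps is the Duhamel integral of this difference, and the smoothing estimate
`‖S_r v‖_{C¹} ≤ C₀ r^{-1/2} ‖v‖_∞` integrates to `∫₀^t C₀ (t-s)^{-1/2} ds = 2 C₀ √t`. The space
derivative of the time integral is bounded through its Lipschitz constant, so the heat kernel only
has to be `C¹` in space (making each `S_r v` differentiable) and jointly measurable (making the time
integrand integrable).
-/

open Real Set Filter

noncomputable def heatKernelDeriv (t x : ℝ) : ℝ :=
  (1 / √(2 * π * t)) * ∑' n : ℤ, (-(x - 2 * π * n) / t) * exp (-(x - 2 * π * n) ^ 2 / (2 * t))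

section HeatKernel

variable {r : ℝ}

-- The Gaussian exponent in the shape of the Jacobi theta majorants
-- `summable_pow_mul_jacobiTheta₂_term_bound`, which dominate the series below.
lemma neg_sq_sub_two_pi_mul_div_le (hr : 0 < r) {R z : ℝ} (hz : |z| ≤ R) (n : ℤ) :
    -(z - 2 * π * n) ^ 2 / (2 * r) ≤ -π * (2 * π / r * n ^ 2 - 2 * (R / r) * |n|) := by
  rw [Int.cast_abs]
  have hzn : z * n ≤ R * |(n : ℝ)| :=
    (le_abs_self _).trans <| by rw [abs_mul]; gcongr
  have hsq : 4 * π ^ 2 * n ^ 2 - 4 * π * R * |(n : ℝ)| ≤ (z - 2 * π * n) ^ 2 := by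
    nlinarith [sq_nonneg z, pi_pos]
  calc -(z - 2 * π * n) ^ 2 / (2 * r)
      ≤ -(4 * π ^ 2 * n ^ 2 - 4 * π * R * |(n : ℝ)|) / (2 * r) := by gcongr
    _ = -π * (2 * π / r * n ^ 2 - 2 * (R / r) * |(n : ℝ)|) := by field_simp; ring

lemma summable_exp_neg_sq_sub_two_pi_mul (hr : 0 < r) (z : ℝ) :
    Summable fun n : ℤ => exp (-(z - 2 * π * n) ^ 2 / (2 * r)) := by
  refine (summable_pow_mul_jacobiTheta₂_term_bound (|z| / r) (T := 2 * π / r) (by positivity)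
    0).of_nonneg_of_le (fun n => (exp_pos _).le) fun n => ?_
  rw [pow_zero, one_mul]
  exact exp_le_exp.2 (neg_sq_sub_two_pi_mul_div_le hr le_rfl n)

lemma norm_heatKernelDeriv_term_le (hr : 0 < r) {R z : ℝ} (hz : |z| ≤ R) (n : ℤ) :
    ‖(-(z - 2 * π * n) / r) * exp (-(z - 2 * π * n) ^ 2 / (2 * r))‖ ≤
      (R + 2 * π * |n|) / r * exp (-π * (2 * π / r * n ^ 2 - 2 * (R / r) * |n|)) := by
  rw [norm_mul, norm_div, norm_neg, Real.norm_of_nonneg hr.le, Real.norm_of_nonneg (exp_pos _).le]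
  have hdist : ‖z - 2 * π * n‖ ≤ R + 2 * π * |n| := by
    refine (norm_sub_le _ _).trans (add_le_add hz (le_of_eq ?_))
    rw [Int.cast_abs, norm_mul, Real.norm_of_nonneg (by positivity)]; rfl
  exact mul_le_mul (by gcongr) (exp_le_exp.2 (neg_sq_sub_two_pi_mul_div_le hr hz n))
    (exp_pos _).le
    (div_nonneg (by have := (abs_nonneg z).trans hz; positivity) hr.le)

lemma summable_heatKernelDeriv_majorant (hr : 0 < r) (R : ℝ) :
    Summable fun n : ℤ =>
      (R + 2 * π * |n|) / r * exp (-π * (2 * π / r * n ^ 2 - 2 * (R / r) * |n|)) := by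
  have h := fun k => summable_pow_mul_jacobiTheta₂_term_bound (R / r) (T := 2 * π / r)
    (by positivity) k
  refine (((h 0).mul_left (R / r)).add ((h 1).mul_left (2 * π / r))).congr fun n => ?_
  simp only [pow_zero, pow_one]
  ring

lemma hasDerivAt_exp_neg_sq_sub_div (c z : ℝ) :
    HasDerivAt (fun z => exp (-(z - c) ^ 2 / (2 * r)))
      ((-(z - c) / r) * exp (-(z - c) ^ 2 / (2 * r))) z := by
  have h : HasDerivAt (fun z => -(z - c) ^ 2 / (2 * r)) (-(z - c) / r) z := by
    refine ((((hasDerivAt_id z).sub_const c).pow 2).neg.div_const (2 * r)).congr_deriv ?_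
    simp only [id, Nat.cast_ofNat, Nat.add_one_sub_one, pow_one, mul_one]
    ring
  convert h.exp using 1
  ring

lemma hasDerivAt_heatKernel (hr : 0 < r) (x : ℝ) :
    HasDerivAt (heatKernel r) (heatKernelDeriv r x) x := by
  have hx : x ∈ Ioo (-(|x| + 1)) (|x| + 1) := abs_lt.1 (lt_add_one _)
  exact (hasDerivAt_tsum_of_isPreconnected (summable_heatKernelDeriv_majorant hr (|x| + 1))
    isOpen_Ioo isPreconnected_Ioo (fun n y _ => hasDerivAt_exp_neg_sq_sub_div _ y)
    (fun n y hy => norm_heatKernelDeriv_term_le hr (abs_lt.2 hy).le n) hx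
    (summable_exp_neg_sq_sub_two_pi_mul hr x) hx).const_mul _

lemma continuous_heatKernel (hr : 0 < r) : Continuous (heatKernel r) :=
  continuous_iff_continuousAt.2 fun x => (hasDerivAt_heatKernel hr x).continuousAt

lemma continuous_heatKernelDeriv (hr : 0 < r) : Continuous (heatKernelDeriv r) := by
  refine continuous_iff_continuousAt.2 fun x => continuousAt_const.mul ?_
  have hx : x ∈ Ioo (-(|x| + 1)) (|x| + 1) := abs_lt.1 (lt_add_one _)
  exact (continuousOn_tsum (fun n => by fun_prop) (summable_heatKernelDeriv_majorant hr (|x| + 1))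
    fun n y hy => norm_heatKernelDeriv_term_le hr (abs_lt.2 hy).le n).continuousAt
      (Ioo_mem_nhds hx.1 hx.2)

lemma measurable_heatKernel : Measurable (Function.uncurry heatKernel) := by
  -- For nonnegative terms the real `tsum` is the `toReal` of the `ℝ≥0∞`-valued one, also when the
  -- series diverges, and `ℝ≥0∞`-valued series of measurable functions are measurable.
  have h : Function.uncurry heatKernel = fun p : ℝ × ℝ => 1 / √(2 * π * p.1) *
      (∑' n : ℤ, ENNReal.ofReal (exp (-(p.2 - 2 * π * n) ^ 2 / (2 * p.1)))).toReal := by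
    ext ⟨t, x⟩
    simp only [ENNReal.tsum_toReal_eq fun _ => ENNReal.ofReal_ne_top,
      ENNReal.toReal_ofReal (exp_pos _).le]
    rfl
  rw [h]
  fun_prop

end HeatKernel

section HeatSemigroup

variable {d : ℕ} {r : ℝ}

lemma hasDerivAt_heatSemigroup (hr : 0 < r) {v : ℝ → EuclideanSpace ℝ (Fin d)}
    (hv : Continuous v) (x : ℝ) :
    HasDerivAt (heatSemigroup r v)
      (∫ y in (0 : ℝ)..(2 * π), heatKernelDeriv r (x - y) • v y) x := by
  obtain ⟨M, hM⟩ := isCompact_Icc.exists_bound_of_continuousOn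
    (continuous_heatKernelDeriv hr).continuousOn (s := Icc (x - 1 - 2 * π) (x + 1))
  obtain ⟨B, hB⟩ :=
    isCompact_Icc.exists_bound_of_continuousOn hv.continuousOn (s := Icc 0 (2 * π))
  have hk := continuous_heatKernel hr
  have hk' := continuous_heatKernelDeriv hr
  refine (intervalIntegral.hasDerivAt_integral_of_dominated_loc_of_deriv_le
    (F' := fun z y => heatKernelDeriv r (z - y) • v y) (bound := fun _ => M * B)
    (Metric.ball_mem_nhds x one_pos)
    (.of_forall fun z => (by fun_prop : Continuous _).aestronglyMeasurable)
    ((by fun_prop : Continuous _).intervalIntegrable _ _)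
    (by fun_prop : Continuous _).aestronglyMeasurable ?_ intervalIntegrable_const ?_).2
  · refine .of_forall fun y hy z hz => ?_
    rw [uIoc_of_le (by positivity)] at hy
    rw [Metric.mem_ball, Real.dist_eq, abs_lt] at hz
    have hzy : z - y ∈ Icc (x - 1 - 2 * π) (x + 1) := ⟨by linarith [hy.2], by linarith [hy.1]⟩
    rw [norm_smul]
    exact mul_le_mul (hM _ hzy) (hB y (Ioc_subset_Icc_self hy)) (norm_nonneg _)
      ((norm_nonneg _).trans (hM _ hzy))
  · refine .of_forall fun y _ z _ => ?_
    simpa using ((hasDerivAt_heatKernel hr (z - y)).comp z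
      ((hasDerivAt_id z).sub_const y)).smul_const (v y)

lemma heatSemigroup_sub (hr : 0 < r) {v v' : ℝ → EuclideanSpace ℝ (Fin d)} (hv : Continuous v)
    (hv' : Continuous v') (x : ℝ) :
    heatSemigroup r v x - heatSemigroup r v' x = heatSemigroup r (v - v') x := by
  have hk := continuous_heatKernel hr
  rw [heatSemigroup, heatSemigroup, ← intervalIntegral.integral_sub
    ((by fun_prop : Continuous _).intervalIntegrable _ _)
    ((by fun_prop : Continuous _).intervalIntegrable _ _)]
  simp only [Pi.sub_apply, smul_sub, heatSemigroup]

lemma stronglyMeasurable_heatSemigroup_sub_left (t x : ℝ)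
    {V : ℝ → ℝ → EuclideanSpace ℝ (Fin d)} (hV : Continuous (Function.uncurry V)) :
    StronglyMeasurable fun s => heatSemigroup (t - s) (V s) x := by
  simp_rw [heatSemigroup, intervalIntegral.integral_of_le (by positivity : (0 : ℝ) ≤ 2 * π)]
  refine StronglyMeasurable.integral_prod_right'
    (f := fun p : ℝ × ℝ => heatKernel (t - p.1) (x - p.2) • V p.1 p.2) ?_
  exact ((measurable_heatKernel.comp (f := fun p : ℝ × ℝ => (t - p.1, x - p.2))
    (by fun_prop)).stronglyMeasurable).smul hV.stronglyMeasurable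

end HeatSemigroup

theorem norm_deriv_intervalIntegral_le {E : Type*} [NormedAddCommGroup E] [NormedSpace ℝ E]
    {G : ℝ → ℝ → E} {β : ℝ → ℝ} {a b : ℝ} (hab : a ≤ b)
    (hG : ∀ z, IntervalIntegrable (fun s => G s z) volume a b)
    (hβ : IntervalIntegrable β volume a b)
    (hGβ : ∀ᵐ s, s ∈ Ioc a b → Differentiable ℝ (G s) ∧ ∀ z, ‖deriv (G s) z‖ ≤ β s) (y : ℝ) :
    ‖deriv (fun z => ∫ s in a..b, G s z) y‖ ≤ ∫ s in a..b, β s := by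
  -- `∫ β` is nonnegative because it bounds `‖∫ s, deriv (G s) y‖`.
  have hβ0 : 0 ≤ ∫ s in a..b, β s := (norm_nonneg _).trans <|
    intervalIntegral.norm_integral_le_of_norm_le (f := fun s => deriv (G s) y) hab
      (hGβ.mono fun s hs hs_mem => (hs hs_mem).2 y) hβ
  refine norm_deriv_le_of_lip' hβ0 (.of_forall fun z => ?_)
  rw [← intervalIntegral.integral_sub (hG z) (hG y), ← intervalIntegral.integral_mul_const]
  refine intervalIntegral.norm_integral_le_of_norm_le hab ?_ (hβ.mul_const _)
  filter_upwards [hGβ] with s hs hs_mem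
  obtain ⟨hdiff, hbound⟩ := hs hs_mem
  exact convex_univ.norm_image_sub_le_of_norm_deriv_le (fun z _ => hdiff z) (fun z _ => hbound z)
    trivial trivial

lemma intervalIntegrable_sub_rpow_neg_half (t : ℝ) :
    IntervalIntegrable (fun s => (t - s) ^ (-(1 : ℝ) / 2)) volume 0 t := by
  simpa using ((intervalIntegral.intervalIntegrable_rpow' (by norm_num) (a := 0) (b := t)
    ).comp_sub_left t).symm

lemma integral_sub_rpow_neg_half (t : ℝ) :
    ∫ s in (0 : ℝ)..t, (t - s) ^ (-(1 : ℝ) / 2) = 2 * √t := by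
  rw [intervalIntegral.integral_comp_sub_left (fun u => u ^ (-(1 : ℝ) / 2)) t, sub_self, sub_zero,
    integral_rpow (Or.inl (by norm_num)), sqrt_eq_rpow, zero_rpow (by norm_num)]
  norm_num
  ring

lemma exists_norm_le_of_continuous_of_periodic {E : Type*} [NormedAddCommGroup E]
    {V : ℝ → ℝ → E} {c : ℝ} (hc : 0 < c) (hV : Continuous (Function.uncurry V))
    (hper : ∀ s, Function.Periodic (V s) c) (a b : ℝ) :
    ∃ B, ∀ s ∈ Icc a b, ∀ z, ‖V s z‖ ≤ B := by
  obtain ⟨B, hB⟩ := (isCompact_Icc.prod (isCompact_Icc (a := 0) (b := c))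
    ).exists_bound_of_continuousOn hV.continuousOn
  refine ⟨B, fun s hs z => ?_⟩
  obtain ⟨y, hy, hzy⟩ := (hper s).exists_mem_Ico₀ hc z
  rw [hzy]
  exact hB (s, y) ⟨hs, Ico_subset_Icc_self hy⟩

lemma ae_sub_mem_Ioc_zero_one {t : ℝ} (ht : t ≤ 1) :
    ∀ᵐ s, s ∈ Ioc 0 t → t - s ∈ Ioc (0 : ℝ) 1 := by
  filter_upwards [volume.ae_ne t] with s hst hs
  exact ⟨sub_pos.2 (hs.2.lt_of_ne hst), by linarith [hs.1]⟩

/-- The smoothing estimate `‖S_r v‖_{C¹} ≤ C₀ r^{-1/2} ‖v‖_∞` of the periodic heat semigroup. -/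
def HeatSmoothingBound (d : ℕ) (C₀ : ℝ) : Prop :=
  ∀ r ∈ Ioc (0 : ℝ) 1, ∀ v : ℝ → EuclideanSpace ℝ (Fin d),
    Continuous v → Function.Periodic v (2 * π) → ∀ B : ℝ, (∀ z, ‖v z‖ ≤ B) →
    ∀ x y, ‖heatSemigroup r v x‖ + ‖deriv (heatSemigroup r v) y‖ ≤ C₀ * r ^ (-(1 : ℝ) / 2) * B

noncomputable def duhamelIntegral {d : ℕ} (V : ℝ → ℝ → EuclideanSpace ℝ (Fin d)) (t x : ℝ) :
    EuclideanSpace ℝ (Fin d) :=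
  ∫ s in (0 : ℝ)..t, heatSemigroup (t - s) (V s) x

namespace HeatSmoothingBound

variable {d : ℕ} {C₀ : ℝ}

lemma nonneg (h : HeatSmoothingBound d C₀) : 0 ≤ C₀ := by
  have h0 : heatSemigroup (d := d) 1 0 = 0 := by ext1 x; simp [heatSemigroup]
  simpa [h0] using h 1 ⟨one_pos, le_rfl⟩ 0 continuous_const (fun _ => rfl) 1 (by simp) 0 0

variable {r B : ℝ} {v : ℝ → EuclideanSpace ℝ (Fin d)}

lemma norm_le (h : HeatSmoothingBound d C₀) (hr : r ∈ Ioc (0 : ℝ) 1) (hv : Continuous v)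
    (hper : Function.Periodic v (2 * π)) (hB : ∀ z, ‖v z‖ ≤ B) (x : ℝ) :
    ‖heatSemigroup r v x‖ ≤ C₀ * r ^ (-(1 : ℝ) / 2) * B :=
  le_of_add_le_of_nonneg_left (h r hr v hv hper B hB x x) (norm_nonneg _)

lemma norm_deriv_le (h : HeatSmoothingBound d C₀) (hr : r ∈ Ioc (0 : ℝ) 1) (hv : Continuous v)
    (hper : Function.Periodic v (2 * π)) (hB : ∀ z, ‖v z‖ ≤ B) (x : ℝ) :
    ‖deriv (heatSemigroup r v) x‖ ≤ C₀ * r ^ (-(1 : ℝ) / 2) * B :=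
  le_of_add_le_of_nonneg_right (h r hr v hv hper B hB x x) (norm_nonneg _)

variable {t : ℝ} {V V' : ℝ → ℝ → EuclideanSpace ℝ (Fin d)}

lemma intervalIntegrable_heatSemigroup (h : HeatSmoothingBound d C₀) (ht0 : 0 ≤ t) (ht1 : t ≤ 1)
    (hV : Continuous (Function.uncurry V)) (hper : ∀ s, Function.Periodic (V s) (2 * π))
    (x : ℝ) : IntervalIntegrable (fun s => heatSemigroup (t - s) (V s) x) volume 0 t := by
  obtain ⟨B, hB⟩ := exists_norm_le_of_continuous_of_periodic two_pi_pos hV hper 0 t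
  refine (((intervalIntegrable_sub_rpow_neg_half t).const_mul C₀).mul_const B).mono_fun'
    (stronglyMeasurable_heatSemigroup_sub_left t x hV).aestronglyMeasurable ?_
  rw [uIoc_of_le ht0, EventuallyLE, ae_restrict_iff' measurableSet_Ioc]
  filter_upwards [ae_sub_mem_Ioc_zero_one ht1] with s hs hs_mem
  exact h.norm_le (hs hs_mem) (hV.uncurry_left s) (hper s) (hB s (Ioc_subset_Icc_self hs_mem)) x

lemma duhamelIntegral_sub (h : HeatSmoothingBound d C₀) (ht0 : 0 ≤ t) (ht1 : t ≤ 1)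
    (hV : Continuous (Function.uncurry V)) (hV' : Continuous (Function.uncurry V'))
    (hper : ∀ s, Function.Periodic (V s) (2 * π)) (hper' : ∀ s, Function.Periodic (V' s) (2 * π))
    (x : ℝ) : duhamelIntegral V t x - duhamelIntegral V' t x = duhamelIntegral (V - V') t x := by
  rw [duhamelIntegral, duhamelIntegral, ← intervalIntegral.integral_sub
    (h.intervalIntegrable_heatSemigroup ht0 ht1 hV hper x)
    (h.intervalIntegrable_heatSemigroup ht0 ht1 hV' hper' x)]
  refine intervalIntegral.integral_congr_ae ?_
  filter_upwards [ae_sub_mem_Ioc_zero_one ht1] with s hs hs_mem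
  rw [uIoc_of_le ht0] at hs_mem
  exact heatSemigroup_sub (hs hs_mem).1 (hV.uncurry_left s) (hV'.uncurry_left s) x

theorem norm_duhamelIntegral_add_norm_deriv_le (h : HeatSmoothingBound d C₀) (ht0 : 0 ≤ t)
    (ht1 : t ≤ 1) (hV : Continuous (Function.uncurry V))
    (hper : ∀ s, Function.Periodic (V s) (2 * π)) (hB : ∀ s ∈ Icc 0 t, ∀ z, ‖V s z‖ ≤ B)
    (x y : ℝ) :
    ‖duhamelIntegral V t x‖ + ‖deriv (duhamelIntegral V t) y‖ ≤ 4 * C₀ * B * √t := by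
  have hβ := ((intervalIntegrable_sub_rpow_neg_half t).const_mul C₀).mul_const B
  have hβint : ∫ s in (0 : ℝ)..t, C₀ * (t - s) ^ (-(1 : ℝ) / 2) * B = 2 * C₀ * B * √t := by
    rw [intervalIntegral.integral_mul_const, intervalIntegral.integral_const_mul,
      integral_sub_rpow_neg_half]
    ring
  have hBs : ∀ s ∈ Ioc 0 t, ∀ z, ‖V s z‖ ≤ B := fun s hs => hB s (Ioc_subset_Icc_self hs)
  have hval : ‖duhamelIntegral V t x‖ ≤ 2 * C₀ * B * √t := by
    rw [← hβint]
    refine intervalIntegral.norm_integral_le_of_norm_le ht0 ?_ hβ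
    filter_upwards [ae_sub_mem_Ioc_zero_one ht1] with s hs hs_mem
    exact h.norm_le (hs hs_mem) (hV.uncurry_left s) (hper s) (hBs s hs_mem) x
  have hder : ‖deriv (duhamelIntegral V t) y‖ ≤ 2 * C₀ * B * √t := by
    rw [← hβint]
    refine norm_deriv_intervalIntegral_le ht0 (h.intervalIntegrable_heatSemigroup ht0 ht1 hV hper)
      hβ ?_ y
    filter_upwards [ae_sub_mem_Ioc_zero_one ht1] with s hs hs_mem
    exact ⟨fun z => (hasDerivAt_heatSemigroup (hs hs_mem).1 (hV.uncurry_left s) z).differentiableAt,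
      h.norm_deriv_le (hs hs_mem) (hV.uncurry_left s) (hper s) (hBs s hs_mem)⟩
  linarith

theorem norm_duhamelIntegral_sub_add_norm_deriv_le (h : HeatSmoothingBound d C₀) (ht0 : 0 ≤ t)
    (ht1 : t ≤ 1) (hV : Continuous (Function.uncurry V)) (hV' : Continuous (Function.uncurry V'))
    (hper : ∀ s, Function.Periodic (V s) (2 * π)) (hper' : ∀ s, Function.Periodic (V' s) (2 * π))
    (hB : ∀ s ∈ Icc 0 t, ∀ z, ‖V s z - V' s z‖ ≤ B) (x y : ℝ) :
    ‖duhamelIntegral V t x - duhamelIntegral V' t x‖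
      + ‖deriv (fun z => duhamelIntegral V t z - duhamelIntegral V' t z) y‖ ≤ 4 * C₀ * B * √t := by
  simp only [h.duhamelIntegral_sub ht0 ht1 hV hV' hper hper']
  exact h.norm_duhamelIntegral_add_norm_deriv_le (V := V - V') ht0 ht1 (hV.sub hV')
    (fun s => (hper s).sub (hper' s)) hB x y

end HeatSmoothingBound

theorem Function.Periodic.deriv {E : Type*} [NormedAddCommGroup E] [NormedSpace ℝ E] {φ : ℝ → E}
    {c : ℝ} (hφ : Function.Periodic φ c) : Function.Periodic (deriv φ) c := fun y => by
  rw [← deriv_comp_add_const, show (fun z => φ (z + c)) = φ from funext hφ]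

lemma norm_nonlinearity_sub_le {E F : Type*} [NormedAddCommGroup E] [NormedSpace ℝ E]
    [NormedAddCommGroup F] [NormedSpace ℝ F] {g : E → F →L[ℝ] E} {f : E → E}
    {Cg Lg Lf L D : ℝ} (hLg : 0 ≤ Lg) (hLf : 0 ≤ Lf) (hgb : ∀ a, ‖g a‖ ≤ Cg)
    (hgl : ∀ a a', ‖g a - g a'‖ ≤ Lg * ‖a - a'‖) (hfl : ∀ a a', ‖f a - f a'‖ ≤ Lf * ‖a - a'‖)
    {a a' : E} {b b' : F} (hb : ‖b‖ ≤ L) (ha : ‖a - a'‖ ≤ D) (hbb : ‖b - b'‖ ≤ D) :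
    ‖g a b + (f a + a) - (g a' b' + (f a' + a'))‖ ≤ (Lg * L + Cg + Lf + 1) * D := by
  have hsplit : g a b + (f a + a) - (g a' b' + (f a' + a'))
      = (g a - g a') b + g a' (b - b') + (f a - f a') + (a - a') := by
    simp only [sub_apply, map_sub]
    abel
  have hgab : ‖(g a - g a') b‖ ≤ Lg * D * L :=
    ((g a - g a').le_opNorm b).trans <| mul_le_mul ((hgl a a').trans (by gcongr)) hb
      (norm_nonneg _) (by have := (norm_nonneg _).trans ha; positivity)
  have hgb' : ‖g a' (b - b')‖ ≤ Cg * D :=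
    ((g a').le_opNorm _).trans <|
      mul_le_mul (hgb a') hbb (norm_nonneg _) ((norm_nonneg _).trans (hgb a'))
  have hfa : ‖f a - f a'‖ ≤ Lf * D := (hfl a a').trans (by gcongr)
  rw [hsplit]
  calc _ ≤ ‖(g a - g a') b‖ + ‖g a' (b - b')‖ + ‖f a - f a'‖ + ‖a - a'‖ := norm_add₄_le
    _ ≤ Lg * D * L + Cg * D + Lf * D + D := by gcongr
    _ = (Lg * L + Cg + Lf + 1) * D := by ring

section DriftIntegrand

variable {d : ℕ}
    (g : EuclideanSpace ℝ (Fin d) → (EuclideanSpace ℝ (Fin d) →L[ℝ] EuclideanSpace ℝ (Fin d)))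
    (f : EuclideanSpace ℝ (Fin d) → EuclideanSpace ℝ (Fin d))
    (H U w : ℝ → ℝ → EuclideanSpace ℝ (Fin d))

noncomputable def driftIntegrand (s y : ℝ) : EuclideanSpace ℝ (Fin d) :=
  g (w s y + H s y + U s y) (deriv (w s) y + deriv (U s) y)
    + (f (w s y + H s y + U s y) + (w s y + H s y + U s y))

lemma driftMap_eq_duhamelIntegral (t x : ℝ) :
    driftMap g f H U w t x = duhamelIntegral (driftIntegrand g f H U w) t x := rfl

variable {g f H U w}

lemma continuous_driftIntegrand (hg : Continuous g) (hf : Continuous f)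
    (hH : Continuous (Function.uncurry H)) (hU : Continuous (Function.uncurry U))
    (hU' : Continuous fun p : ℝ × ℝ => deriv (U p.1) p.2) (hw : Continuous (Function.uncurry w))
    (hw' : Continuous fun p : ℝ × ℝ => deriv (w p.1) p.2) :
    Continuous (Function.uncurry (driftIntegrand g f H U w)) := by
  have hu : Continuous fun p : ℝ × ℝ => w p.1 p.2 + H p.1 p.2 + U p.1 p.2 := (hw.add hH).add hU
  exact ((hg.comp hu).clm_apply (hw'.add hU')).add ((hf.comp hu).add hu)

lemma periodic_driftIntegrand {c : ℝ} (hH : ∀ s, Function.Periodic (H s) c)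
    (hU : ∀ s, Function.Periodic (U s) c) (hw : ∀ s, Function.Periodic (w s) c) (s : ℝ) :
    Function.Periodic (driftIntegrand g f H U w s) c := fun y => by
  simp only [driftIntegrand, hH s y, hU s y, hw s y, (hU s).deriv y, (hw s).deriv y]

lemma norm_driftIntegrand_sub_le {w' : ℝ → ℝ → EuclideanSpace ℝ (Fin d)} {Cg Lg Lf K D : ℝ}
    (hg : Differentiable ℝ g) (hgb : ∀ a, ‖g a‖ ≤ Cg) (hg' : ∀ a, ‖fderiv ℝ g a‖ ≤ Lg)
    (hf : Differentiable ℝ f) (hf' : ∀ a, ‖fderiv ℝ f a‖ ≤ Lf)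
    {s y : ℝ} (hwK : ‖deriv (w s) y‖ ≤ K) (hUK : ‖deriv (U s) y‖ ≤ K)
    (hD : ‖w s y - w' s y‖ + ‖deriv (w s) y - deriv (w' s) y‖ ≤ D) :
    ‖driftIntegrand g f H U w s y - driftIntegrand g f H U w' s y‖
      ≤ (Lg * (2 * K) + Cg + Lf + 1) * D := by
  have hgl : ∀ a a', ‖g a - g a'‖ ≤ Lg * ‖a - a'‖ := fun a a' =>
    convex_univ.norm_image_sub_le_of_norm_fderiv_le (fun v _ => hg v) (fun v _ => hg' v)
      trivial trivial
  have hfl : ∀ a a', ‖f a - f a'‖ ≤ Lf * ‖a - a'‖ := fun a a' =>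
    convex_univ.norm_image_sub_le_of_norm_fderiv_le (fun v _ => hf v) (fun v _ => hf' v)
      trivial trivial
  refine norm_nonlinearity_sub_le ((norm_nonneg (fderiv ℝ g 0)).trans (hg' 0))
    ((norm_nonneg (fderiv ℝ f 0)).trans (hf' 0)) hgb hgl hfl
    ((norm_add_le _ _).trans (by linarith)) ?_ ?_
  · rw [show w s y + H s y + U s y - (w' s y + H s y + U s y) = w s y - w' s y by abel]
    linarith [norm_nonneg (deriv (w s) y - deriv (w' s) y)]
  · rw [show deriv (w s) y + deriv (U s) y - (deriv (w' s) y + deriv (U s) y)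
      = deriv (w s) y - deriv (w' s) y by abel]
    linarith [norm_nonneg (w s y - w' s y)]

end DriftIntegrand

theorem driftMap_contraction_general
    (d : ℕ) (K : ℝ)
    (Cg Cg' Cf' : ℝ)
    (C₀ : ℝ)
    (hC₀ : ∀ r ∈ Set.Ioc (0 : ℝ) 1, ∀ v : ℝ → EuclideanSpace ℝ (Fin d),
      Continuous v → (∀ z, v (z + 2 * Real.pi) = v z) → ∀ B : ℝ, (∀ z, ‖v z‖ ≤ B) →
      ∀ x y, ‖heatSemigroup r v x‖ + ‖deriv (heatSemigroup r v) y‖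
        ≤ C₀ * r ^ (-(1 : ℝ) / 2) * B) :
    ∃ C : ℝ,
      ∀ (g : EuclideanSpace ℝ (Fin d) →
             (EuclideanSpace ℝ (Fin d) →L[ℝ] EuclideanSpace ℝ (Fin d)))
        (f : EuclideanSpace ℝ (Fin d) → EuclideanSpace ℝ (Fin d)),
      ContDiff ℝ 1 g → ContDiff ℝ 1 f →
      (∀ v, ‖g v‖ ≤ Cg) → (∀ v, ‖fderiv ℝ g v‖ ≤ Cg') → (∀ v, ‖fderiv ℝ f v‖ ≤ Cf') →
      (∃ Cf : ℝ, ∀ v, ‖f v‖ ≤ Cf) →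
      ∀ (T : ℝ), 0 < T → T ≤ 1 →
      ∀ (H U w w' : ℝ → ℝ → EuclideanSpace ℝ (Fin d)),
      -- `H : [0,T] → C_per` continuous, with sup norm bounded by `H̄`
      (Continuous fun p : ℝ × ℝ => H p.1 p.2) →
      (∀ t x, H t (x + 2 * Real.pi) = H t x) →
      ∀ (Hbar : ℝ), (∀ t ∈ Set.Icc (0 : ℝ) T, ∀ x, ‖H t x‖ ≤ Hbar) →
      -- `U : [0,T] → C¹_per` continuous with `sup_t ‖U_t‖_{C¹} ≤ K`
      (Continuous fun p : ℝ × ℝ => U p.1 p.2) →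
      (Continuous fun p : ℝ × ℝ => deriv (U p.1) p.2) →
      (∀ t, ContDiff ℝ 1 (U t)) →
      (∀ t x, U t (x + 2 * Real.pi) = U t x) →
      (∀ t ∈ Set.Icc (0 : ℝ) T, ∀ x y, ‖U t x‖ + ‖deriv (U t) y‖ ≤ K) →
      -- `w : [0,T] → C¹_per` continuous with `sup_t ‖w_t‖_{C¹} ≤ K`
      (Continuous fun p : ℝ × ℝ => w p.1 p.2) →
      (Continuous fun p : ℝ × ℝ => deriv (w p.1) p.2) →
      (∀ t, ContDiff ℝ 1 (w t)) →
      (∀ t x, w t (x + 2 * Real.pi) = w t x) →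
      (∀ t ∈ Set.Icc (0 : ℝ) T, ∀ x y, ‖w t x‖ + ‖deriv (w t) y‖ ≤ K) →
      -- `w̄ : [0,T] → C¹_per` continuous with `sup_t ‖w̄_t‖_{C¹} ≤ K`
      (Continuous fun p : ℝ × ℝ => w' p.1 p.2) →
      (Continuous fun p : ℝ × ℝ => deriv (w' p.1) p.2) →
      (∀ t, ContDiff ℝ 1 (w' t)) →
      (∀ t x, w' t (x + 2 * Real.pi) = w' t x) →
      (∀ t ∈ Set.Icc (0 : ℝ) T, ∀ x y, ‖w' t x‖ + ‖deriv (w' t) y‖ ≤ K) →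
      -- `D` : a bound for `sup_{0≤s≤T} ‖w_s - w̄_s‖_{C¹}`
      ∀ (D : ℝ),
      (∀ s ∈ Set.Icc (0 : ℝ) T, ∀ x y,
        ‖w s x - w' s x‖ + ‖deriv (w s) y - deriv (w' s) y‖ ≤ D) →
      ∀ t ∈ Set.Icc (0 : ℝ) T, ∀ x y,
        ‖driftMap g f H U w t x - driftMap g f H U w' t x‖ +
          ‖deriv (fun z => driftMap g f H U w t z - driftMap g f H U w' t z) y‖
          ≤ C * (1 + Hbar) * Real.sqrt T * D := by
  refine ⟨4 * C₀ * (Cg' * (2 * K) + Cg + Cf' + 1), ?_⟩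
  intro g f hg hf hgb hg' hf' _ T hT0 hT1 H U w w' hH hHper Hbar hHbar hU hdU _ hUper hUK
    hw hdw _ hwper hwK hw' hdw' _ hw'per _ D hD t ht x y
  have hC₀ : HeatSmoothingBound d C₀ := hC₀
  have hVB : ∀ s ∈ Icc 0 t, ∀ z, ‖driftIntegrand g f H U w s z - driftIntegrand g f H U w' s z‖
      ≤ (Cg' * (2 * K) + Cg + Cf' + 1) * D := fun s hs z =>
    have hsT : s ∈ Icc 0 T := ⟨hs.1, hs.2.trans ht.2⟩
    norm_driftIntegrand_sub_le (hg.differentiable one_ne_zero) hgb hg'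
      (hf.differentiable one_ne_zero) hf'
      (le_of_add_le_of_nonneg_right (hwK s hsT z z) (norm_nonneg _))
      (le_of_add_le_of_nonneg_right (hUK s hsT z z) (norm_nonneg _)) (hD s hsT z z)
  have hsqrt : √t ≤ (1 + Hbar) * √T := (sqrt_le_sqrt ht.2).trans <| le_mul_of_one_le_left
    (sqrt_nonneg T) (by linarith [(norm_nonneg _).trans (hHbar 0 ⟨le_rfl, hT0.le⟩ 0)])
  simp only [driftMap_eq_duhamelIntegral]
  calc _ ≤ 4 * C₀ * ((Cg' * (2 * K) + Cg + Cf' + 1) * D) * √t :=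
        hC₀.norm_duhamelIntegral_sub_add_norm_deriv_le ht.1 (ht.2.trans hT1)
          (continuous_driftIntegrand hg.continuous hf.continuous hH hU hdU hw hdw)
          (continuous_driftIntegrand hg.continuous hf.continuous hH hU hdU hw' hdw')
          (periodic_driftIntegrand hHper hUper hwper) (periodic_driftIntegrand hHper hUper hw'per)
          hVB x y
    _ ≤ 4 * C₀ * ((Cg' * (2 * K) + Cg + Cf' + 1) * D) * ((1 + Hbar) * √T) := by
        have := hC₀.nonneg
        have := (norm_nonneg _).trans (hVB 0 ⟨le_rfl, ht.1⟩ 0)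
        gcongr
    _ = _ := by ring

/-- Contraction estimate for the drift part of the fixed-point map:
there is a constant `C` depending only on `K`, `d`, `‖g‖_∞`, `‖Dg‖_∞`, `‖Df‖_∞` and the
heat-semigroup constant `C₀` (and not on `T`, `H`, `U`, `w`, `w̄`) such that
`sup_{0≤t≤T} ‖(M w)(t,·) - (M w̄)(t,·)‖_{C¹} ≤ C (1+H̄) T^{1/2} sup_{0≤s≤T} ‖w_s - w̄_s‖_{C¹}`. -/
theorem driftMap_contraction
    (d : ℕ) (hd : 1 ≤ d) (K : ℝ) (hK : 1 < K)
    (Cg Cg' Cf' : ℝ)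
    (C₀ : ℝ)
    (hC₀ : ∀ r ∈ Set.Ioc (0 : ℝ) 1, ∀ v : ℝ → EuclideanSpace ℝ (Fin d),
      Continuous v → (∀ z, v (z + 2 * Real.pi) = v z) → ∀ B : ℝ, (∀ z, ‖v z‖ ≤ B) →
      ∀ x y, ‖heatSemigroup r v x‖ + ‖deriv (heatSemigroup r v) y‖
        ≤ C₀ * r ^ (-(1 : ℝ) / 2) * B) :
    ∃ C : ℝ,
      ∀ (g : EuclideanSpace ℝ (Fin d) →
             (EuclideanSpace ℝ (Fin d) →L[ℝ] EuclideanSpace ℝ (Fin d)))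
        (f : EuclideanSpace ℝ (Fin d) → EuclideanSpace ℝ (Fin d)),
      ContDiff ℝ 1 g → ContDiff ℝ 1 f →
      (∀ v, ‖g v‖ ≤ Cg) → (∀ v, ‖fderiv ℝ g v‖ ≤ Cg') → (∀ v, ‖fderiv ℝ f v‖ ≤ Cf') →
      (∃ Cf : ℝ, ∀ v, ‖f v‖ ≤ Cf) →
      ∀ (T : ℝ), 0 < T → T ≤ 1 →
      ∀ (H U w w' : ℝ → ℝ → EuclideanSpace ℝ (Fin d)),
      -- `H : [0,T] → C_per` continuous, with sup norm bounded by `H̄`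
      (Continuous fun p : ℝ × ℝ => H p.1 p.2) →
      (∀ t x, H t (x + 2 * Real.pi) = H t x) →
      ∀ (Hbar : ℝ), (∀ t ∈ Set.Icc (0 : ℝ) T, ∀ x, ‖H t x‖ ≤ Hbar) →
      -- `U : [0,T] → C¹_per` continuous with `sup_t ‖U_t‖_{C¹} ≤ K`
      (Continuous fun p : ℝ × ℝ => U p.1 p.2) →
      (Continuous fun p : ℝ × ℝ => deriv (U p.1) p.2) →
      (∀ t, ContDiff ℝ 1 (U t)) →
      (∀ t x, U t (x + 2 * Real.pi) = U t x) →
      (∀ t ∈ Set.Icc (0 : ℝ) T, ∀ x y, ‖U t x‖ + ‖deriv (U t) y‖ ≤ K) →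
      -- `w : [0,T] → C¹_per` continuous with `sup_t ‖w_t‖_{C¹} ≤ K`
      (Continuous fun p : ℝ × ℝ => w p.1 p.2) →
      (Continuous fun p : ℝ × ℝ => deriv (w p.1) p.2) →
      (∀ t, ContDiff ℝ 1 (w t)) →
      (∀ t x, w t (x + 2 * Real.pi) = w t x) →
      (∀ t ∈ Set.Icc (0 : ℝ) T, ∀ x y, ‖w t x‖ + ‖deriv (w t) y‖ ≤ K) →
      -- `w̄ : [0,T] → C¹_per` continuous with `sup_t ‖w̄_t‖_{C¹} ≤ K`
      (Continuous fun p : ℝ × ℝ => w' p.1 p.2) →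
      (Continuous fun p : ℝ × ℝ => deriv (w' p.1) p.2) →
      (∀ t, ContDiff ℝ 1 (w' t)) →
      (∀ t x, w' t (x + 2 * Real.pi) = w' t x) →
      (∀ t ∈ Set.Icc (0 : ℝ) T, ∀ x y, ‖w' t x‖ + ‖deriv (w' t) y‖ ≤ K) →
      -- `D` : a bound for `sup_{0≤s≤T} ‖w_s - w̄_s‖_{C¹}`
      ∀ (D : ℝ),
      (∀ s ∈ Set.Icc (0 : ℝ) T, ∀ x y,
        ‖w s x - w' s x‖ + ‖deriv (w s) y - deriv (w' s) y‖ ≤ D) →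
      ∀ t ∈ Set.Icc (0 : ℝ) T, ∀ x y,
        ‖driftMap g f H U w t x - driftMap g f H U w' t x‖ +
          ‖deriv (fun z => driftMap g f H U w t z - driftMap g f H U w' t z) y‖
          ≤ C * (1 + Hbar) * Real.sqrt T * D :=
  driftMap_contraction_general d K Cg Cg' Cf' C₀ hC₀
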